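/- arXiv:2307.15930 — 3 statements merged into one kernel-verified Lean document; each statement's English description precedes it below -/
import Mathlib

section
/- Let A be a type equipped with an independence relation I : A → A → Prop that is symmetric and irreflexive, and let ~ be the swap-equivalence on List A. Then for all lists l, l' over A, l ~ l' holds if and only if l and l' have the same length and there exists a bijection σ : Fin l.length ≃ Fin l.length such that (i) for every position i, the letter of l' at position σ i equals the letter of l at position i, and (ii) for all positions i < j such that the letters of l at positions i and j are dependent (i.e., ¬ I (l.get i) (l.get j)), one has σ i < σ j. In other words, two execution sequences are swap-equivalent exactly when one is obtained from the other by a permutation of events that preserves the relative order of every pair of dependent events (i.e., they have the same happens-before trace). -/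
/-! A swap moves two adjacent independent letters past each other, so the transposition of
their positions keeps every dependent pair in order; bijections with this property compose, and by
symmetry of `I` they invert. Conversely, given such a bijection `σ`, every letter of `l'` before
position `σ 0` is independent of the first letter of `l`, so that letter can be bubbled to the front
of `l'` by swaps. Deleting it from both words leaves a bijection of the same kind, and induction on
the length concludes. -/

/-- One swap step: exchange two adjacent independent letters. -/
def SwapStep {A : Type*} (I : A → A → Prop) (l l' : List A) : Prop :=
  ∃ (u v : List A) (a b : A), I a b ∧ l = u ++ a :: b :: v ∧ l' = u ++ b :: a :: v

/-- Swap-equivalence: the smallest equivalence relation containing `SwapStep I`. -/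
def SwapEquiv {A : Type*} (I : A → A → Prop) : List A → List A → Prop :=
  Relation.EqvGen (SwapStep I)

def Equiv.finRemoveNth {n m : ℕ} (σ : Fin (n + 1) ≃ Fin (m + 1)) (p : Fin (n + 1)) :
    Fin n ≃ Fin m :=
  (finSuccAboveEquiv p).trans
    ((σ.subtypeEquiv fun _ => σ.apply_eq_iff_eq.not.symm).trans (finSuccAboveEquiv (σ p)).symm)

theorem Equiv.succAbove_finRemoveNth {n m : ℕ} (σ : Fin (n + 1) ≃ Fin (m + 1))
    (p : Fin (n + 1)) (i : Fin n) :
    (σ p).succAbove (σ.finRemoveNth p i) = σ (p.succAbove i) := by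
  simp only [Equiv.finRemoveNth, Equiv.trans_apply, Equiv.subtypeEquiv_apply,
    finSuccAboveEquiv_apply]
  exact congrArg Subtype.val ((finSuccAboveEquiv (σ p)).apply_symm_apply _)

section

variable {A : Type*} {I : A → A → Prop}

structure IsReordering (I : A → A → Prop) {n m : ℕ} (w : Fin n → A) (w' : Fin m → A)
    (σ : Fin n ≃ Fin m) : Prop where
  apply_eq : ∀ i, w' (σ i) = w i
  lt_of_dependent : ∀ i j, i < j → ¬ I (w i) (w j) → σ i < σ j

namespace IsReordering

variable {n m k : ℕ} {w : Fin n → A} {w' : Fin m → A} {w'' : Fin k → A}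
  {σ : Fin n ≃ Fin m} {τ : Fin m ≃ Fin k}

theorem refl (w : Fin n → A) : IsReordering I w w (Equiv.refl _) :=
  ⟨fun _ => rfl, fun _ _ hij _ => hij⟩

theorem trans (hσ : IsReordering I w w' σ) (hτ : IsReordering I w' w'' τ) :
    IsReordering I w w'' (σ.trans τ) where
  apply_eq i := (hτ.apply_eq (σ i)).trans (hσ.apply_eq i)
  lt_of_dependent i j hij hdep :=
    hτ.lt_of_dependent _ _ (hσ.lt_of_dependent i j hij hdep) (by rwa [hσ.apply_eq, hσ.apply_eq])

theorem symm (hI : ∀ a b, I a b → I b a) (hσ : IsReordering I w w' σ) :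
    IsReordering I w' w σ.symm where
  apply_eq i := by rw [← hσ.apply_eq (σ.symm i), σ.apply_symm_apply]
  lt_of_dependent i j hij hdep := by
    refine lt_of_le_of_ne (not_lt.1 fun hji => ?_) (σ.symm.injective.ne hij.ne)
    have := hσ.lt_of_dependent _ _ hji (by
      simpa only [← hσ.apply_eq, Equiv.apply_symm_apply] using fun h => hdep (hI _ _ h))
    simp only [Equiv.apply_symm_apply] at this
    exact lt_asymm hij this

theorem removeNth {w : Fin (n + 1) → A} {w' : Fin (m + 1) → A} {σ : Fin (n + 1) ≃ Fin (m + 1)}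
    (hσ : IsReordering I w w' σ) (p : Fin (n + 1)) :
    IsReordering I (p.removeNth w) ((σ p).removeNth w') (σ.finRemoveNth p) where
  apply_eq i := by
    simp only [Fin.removeNth_apply, Equiv.succAbove_finRemoveNth, hσ.apply_eq]
  lt_of_dependent i j hij hdep := by
    rw [← Fin.succAbove_lt_succAbove_iff (p := σ p), σ.succAbove_finRemoveNth,
      σ.succAbove_finRemoveNth]
    exact hσ.lt_of_dependent _ _ (Fin.succAbove_lt_succAbove_iff.2 hij) hdep

theorem indep_of_lt_apply_zero {w : Fin (n + 1) → A} {σ : Fin (n + 1) ≃ Fin m}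
    (hσ : IsReordering I w w' σ) {k : Fin m} (hk : k < σ 0) : I (w 0) (w' k) := by
  by_contra hdep
  rw [← σ.apply_symm_apply k, hσ.apply_eq] at hdep
  rw [← σ.apply_symm_apply k] at hk
  have hpos : 0 < σ.symm k := by
    refine Fin.pos_iff_ne_zero.2 fun h0 => ?_
    rw [h0] at hk
    exact lt_irrefl _ hk
  exact lt_asymm hk (hσ.lt_of_dependent _ _ hpos hdep)

end IsReordering

theorem SwapEquiv.cons {l l' : List A} (a : A) (h : SwapEquiv I l l') :
    SwapEquiv I (a :: l) (a :: l') := by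
  induction h with
  | rel _ _ hstep =>
    obtain ⟨u, v, b, c, hbc, rfl, rfl⟩ := hstep
    exact .rel _ _ ⟨a :: u, v, b, c, hbc, rfl, rfl⟩
  | refl => exact .refl _
  | symm _ _ _ ih => exact .symm _ _ ih
  | trans _ _ _ _ _ ih₁ ih₂ => exact .trans _ _ _ ih₁ ih₂

theorem SwapEquiv.swap {a b : A} (hab : I a b) (l : List A) :
    SwapEquiv I (a :: b :: l) (b :: a :: l) :=
  .rel _ _ ⟨[], l, a, b, hab, rfl, rfl⟩

theorem swapEquiv_cons_removeNth {n : ℕ} (w : Fin (n + 1) → A) (p : Fin (n + 1))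
    (hp : ∀ k < p, I (w p) (w k)) :
    SwapEquiv I (w p :: List.ofFn (p.removeNth w)) (List.ofFn w) := by
  induction n with
  | zero =>
    rw [Fin.fin_one_eq_zero p, Fin.removeNth_zero, List.ofFn_succ (f := w)]
    exact .refl _
  | succ n ih =>
    cases p using Fin.cases with
    | zero =>
      rw [Fin.removeNth_zero, List.ofFn_succ (f := w)]
      exact .refl _
    | succ q =>
      have hw : q.succ.removeNth w = Fin.cons (w 0) (q.removeNth (Fin.tail w)) := by
        rw [← Fin.cons_comp_succ_succAbove, Fin.cons_self_tail]; rfl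
      rw [hw, List.ofFn_cons, List.ofFn_succ]
      refine .trans _ _ _ (SwapEquiv.swap (hp 0 (Fin.succ_pos q)) _) (SwapEquiv.cons _ ?_)
      exact ih (Fin.tail w) q fun k hk => hp k.succ (Fin.succ_lt_succ_iff.2 hk)

theorem swapEquiv_ofFn_of_isReordering {n m : ℕ} {w : Fin n → A} {w' : Fin m → A}
    {σ : Fin n ≃ Fin m} (hσ : IsReordering I w w' σ) :
    SwapEquiv I (List.ofFn w) (List.ofFn w') := by
  induction n generalizing m with
  | zero =>
    obtain rfl : m = 0 := by simpa using (Fin.equiv_iff_eq.1 ⟨σ⟩).symm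
    simpa only [List.ofFn_zero] using .refl _
  | succ n ih =>
    obtain ⟨m, rfl⟩ : ∃ m', m = m' + 1 := Nat.exists_eq_add_one.2 (σ 0).pos
    have hfront := swapEquiv_cons_removeNth w' (σ 0) fun k hk => by
      rw [hσ.apply_eq]; exact hσ.indep_of_lt_apply_zero hk
    rw [hσ.apply_eq] at hfront
    rw [List.ofFn_succ]
    exact .trans _ _ _ (SwapEquiv.cons _ (ih (hσ.removeNth 0))) hfront

theorem exists_isReordering_of_swapStep {l l' : List A} (h : SwapStep I l l') :
    ∃ σ : Fin l.length ≃ Fin l'.length, IsReordering I l.get l'.get σ := by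
  obtain ⟨u, v, a, b, hab, rfl, rfl⟩ := h
  have hlen : (u ++ a :: b :: v).length = (u ++ b :: a :: v).length := by simp
  obtain ⟨i₀, hi₀⟩ : ∃ i₀ : Fin (u ++ a :: b :: v).length, i₀.val = u.length :=
    ⟨⟨u.length, by simp⟩, rfl⟩
  obtain ⟨i₁, hi₁⟩ : ∃ i₁ : Fin (u ++ a :: b :: v).length, i₁.val = u.length + 1 :=
    ⟨⟨u.length + 1, by simp⟩, rfl⟩
  refine ⟨(Equiv.swap i₀ i₁).trans (finCongr hlen), fun i => ?_, fun i j hij hdep => ?_⟩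
  · simp only [Equiv.trans_apply, finCongr_apply, Equiv.swap_apply_def, List.get_eq_getElem]
    split_ifs with h₀ h₁
    · simp [h₀, hi₀, hi₁]
    · simp [h₁, hi₀, hi₁]
    · rw [Fin.ext_iff, hi₀] at h₀
      rw [Fin.ext_iff, hi₁] at h₁
      simp only [Fin.val_cast, List.getElem_append, List.getElem_cons]
      split_ifs <;> first | rfl | omega
  · simp only [Equiv.trans_apply, finCongr_apply, Fin.cast_lt_cast]
    rw [Fin.lt_def] at hij ⊢
    by_cases h : i = i₀ ∧ j = i₁
    · obtain ⟨rfl, rfl⟩ := h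
      exact (hdep (by simpa [hi₀, hi₁] using hab)).elim
    · simp only [Equiv.swap_apply_def, Fin.ext_iff] at h ⊢
      split_ifs <;> omega

theorem exists_isReordering_of_swapEquiv (hI : ∀ a b, I a b → I b a) {l l' : List A}
    (h : SwapEquiv I l l') :
    ∃ σ : Fin l.length ≃ Fin l'.length, IsReordering I l.get l'.get σ := by
  induction h with
  | rel _ _ hstep => exact exists_isReordering_of_swapStep hstep
  | refl l => exact ⟨_, .refl l.get⟩
  | symm _ _ _ ih =>
    obtain ⟨σ, hσ⟩ := ih
    exact ⟨_, hσ.symm hI⟩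
  | trans _ _ _ _ _ ih₁ ih₂ =>
    obtain ⟨σ, hσ⟩ := ih₁
    obtain ⟨τ, hτ⟩ := ih₂
    exact ⟨_, hσ.trans hτ⟩

end

theorem swapEquiv_iff_exists_order_preserving_bijection_general {A : Type*}
    (I : A → A → Prop) (hsymm : ∀ a b, I a b → I b a)
    (l l' : List A) :
    SwapEquiv I l l' ↔
      ∃ h : l.length = l'.length, ∃ σ : Fin l.length ≃ Fin l.length,
        (∀ i : Fin l.length, l'.get (Fin.cast h (σ i)) = l.get i) ∧
        (∀ i j : Fin l.length, i < j → ¬ I (l.get i) (l.get j) → σ i < σ j) := by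
  constructor
  · intro h
    obtain ⟨σ, hσ⟩ := exists_isReordering_of_swapEquiv hsymm h
    have hlen : l.length = l'.length := by simpa using Fin.equiv_iff_eq.1 ⟨σ⟩
    refine ⟨hlen, σ.trans (finCongr hlen.symm), fun i => ?_, fun i j hij hdep => ?_⟩
    · simpa using hσ.apply_eq i
    · simpa using hσ.lt_of_dependent i j hij hdep
  · rintro ⟨hlen, σ, hget, hdep⟩
    have := swapEquiv_ofFn_of_isReordering (w' := fun k => l'.get (Fin.cast hlen k)) ⟨hget, hdep⟩
    rwa [List.ofFn_get, ← List.ofFn_congr hlen.symm, List.ofFn_get] at this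

theorem swapEquiv_iff_exists_order_preserving_bijection {A : Type*}
    (I : A → A → Prop) (hsymm : ∀ a b, I a b → I b a) (hirr : ∀ a, ¬ I a a)
    (l l' : List A) :
    SwapEquiv I l l' ↔
      ∃ h : l.length = l'.length, ∃ σ : Fin l.length ≃ Fin l.length,
        (∀ i : Fin l.length, l'.get (Fin.cast h (σ i)) = l.get i) ∧
        (∀ i j : Fin l.length, i < j → ¬ I (l.get i) (l.get j) → σ i < σ j) :=
  swapEquiv_iff_exists_order_preserving_bijection_general I hsymm l l'
end

section
/- Let X be a finite type of events with msg : X → M (M finite, msg surjective) and hdl : M → H, and let R be a relation on X. Then there exists a serialized strict linear order on X extending R if and only if there exists a relation < on M that is a strict total order on the messages of each handler (i.e., for any two distinct messages p, q with hdl p = hdl q, exactly one of p < q, q < p holds, and < is transitive and irreflexive on each such fiber) such that the relation R ∪ { (e, e') | hdl (msg e) = hdl (msg e') and msg e < msg e' } is acyclic. (This is the key combinatorial equivalence underlying the paper's NP-membership argument for event-driven consistency: a happens-before graph is realizable by a serialized execution exactly when some per-handler total order on its messages, added to the happens-before edges, yields an acyclic relation.) -/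
/-- A strict linear order `L` on events is serialized if no event of another
message on the same handler can occur strictly between two events of one message. -/
def Serialized {X M H : Type*} (msg : X → M) (hdl : M → H)
    (L : X → X → Prop) : Prop :=
  ∀ e1 e2 e' : X, msg e1 = msg e2 → msg e' ≠ msg e1 →
    hdl (msg e') = hdl (msg e1) → ¬ (L e1 e' ∧ L e' e2)

/-- A relation is acyclic if its transitive closure is irreflexive. -/
def RelAcyclic {X : Type*} (R : X → X → Prop) : Prop :=
  Irreflexive (Relation.TransGen R)

/-!
In a serialized linear order `L` the events of each message form a contiguous block on their
handler, so comparing one representative of each message gives a total order on the messages of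
every handler, and `L` puts all events of the earlier message before all events of the later one.
Hence `R` together with these message edges lies inside `L` and is acyclic.

Conversely, an acyclic relation extends to a strict linear order (Szpilrajn). If the relation
contains all message edges of a per-handler total order, two messages on one handler are
compared in that order event by event, so no event of one can fall between two events of the
other: the extension is serialized.
-/

open Relation

section Linearization

variable {X : Type*} {R : X → X → Prop}

theorem IsLinearOrder.isStrictTotalOrder_and_ne (s : X → X → Prop) [IsLinearOrder X s] :
    IsStrictTotalOrder X (fun a b => s a b ∧ a ≠ b) where
  trichotomous a b hab hba := by
    by_contra hne
    rcases total_of s a b with h | h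
    · exact hab ⟨h, hne⟩
    · exact hba ⟨h, Ne.symm hne⟩
  irrefl _ h := h.2 rfl
  trans _ _ _ hab hbc := ⟨trans_of s hab.1 hbc.1, fun h => hab.2 (antisymm_of s hab.1 (h ▸ hbc.1))⟩

theorem relAcyclic_of_le {L : X → X → Prop} [IsStrictOrder X L] (h : R ≤ L) : RelAcyclic R :=
  fun a ha => irrefl_of L a (transGen_minimal h a a ha)

theorem RelAcyclic.isPartialOrder_reflTransGen (h : RelAcyclic R) :
    IsPartialOrder X (ReflTransGen R) where
  antisymm a b hab hba := by
    rcases reflTransGen_iff_eq_or_transGen.mp hab with rfl | hab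
    · rfl
    rcases reflTransGen_iff_eq_or_transGen.mp hba with rfl | hba
    · rfl
    exact absurd (hab.trans hba) (h a)

theorem RelAcyclic.exists_isStrictTotalOrder_le (h : RelAcyclic R) :
    ∃ L : X → X → Prop, IsStrictTotalOrder X L ∧ R ≤ L := by
  have := h.isPartialOrder_reflTransGen
  obtain ⟨s, hs, hRs⟩ := extend_partialOrder (ReflTransGen R)
  refine ⟨fun a b => s a b ∧ a ≠ b, IsLinearOrder.isStrictTotalOrder_and_ne s, fun a b hab => ?_⟩
  refine ⟨hRs a b (ReflTransGen.single hab), ?_⟩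
  rintro rfl
  exact h a (TransGen.single hab)

end Linearization

namespace Serialized

variable {X M H : Type*} {msg : X → M} {hdl : M → H} {L : X → X → Prop} [IsStrictTotalOrder X L]

theorem lt_of_lt_of_msg_eq_left (hS : Serialized msg hdl L) {a b c : X} (hac : L a c)
    (hab : msg a = msg b) (hne : msg c ≠ msg a) (hh : hdl (msg c) = hdl (msg a)) : L b c := by
  rcases trichotomous_of L b c with hbc | rfl | hcb
  · exact hbc
  · exact absurd hab.symm hne
  · exact absurd ⟨hac, hcb⟩ (hS a b c hab hne hh)

theorem lt_of_lt_of_msg_eq_right (hS : Serialized msg hdl L) {a c d : X} (hac : L a c)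
    (hcd : msg c = msg d) (hne : msg a ≠ msg c) (hh : hdl (msg a) = hdl (msg c)) : L a d := by
  rcases trichotomous_of L a d with had | rfl | hda
  · exact had
  · exact absurd hcd.symm hne
  · exact absurd ⟨hda, hac⟩ (hS d c a hcd.symm (hcd ▸ hne) (hcd ▸ hh))

theorem lt_of_lt_of_msg_eq (hS : Serialized msg hdl L) {a b c d : X} (hac : L a c)
    (hab : msg a = msg b) (hcd : msg c = msg d) (hne : msg a ≠ msg c)
    (hh : hdl (msg a) = hdl (msg c)) : L b d :=
  hS.lt_of_lt_of_msg_eq_right (hS.lt_of_lt_of_msg_eq_left hac hab (Ne.symm hne) hh.symm) hcd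
    (hab ▸ hne) (hab ▸ hh)

theorem exists_msg_order (hsurj : Function.Surjective msg) (hS : Serialized msg hdl L) :
    ∃ lt : M → M → Prop,
      (∀ p q : M, p ≠ q → hdl p = hdl q → Xor (lt p q) (lt q p)) ∧
      (∀ p q r : M, lt p q → lt q r → lt p r) ∧
      (∀ p : M, ¬ lt p p) ∧
      ∀ e e' : X, hdl (msg e) = hdl (msg e') → lt (msg e) (msg e') → L e e' := by
  set σ := Function.surjInv hsurj
  have hσ : ∀ p, msg (σ p) = p := Function.surjInv_eq hsurj
  refine ⟨fun p q => p ≠ q ∧ hdl p = hdl q ∧ L (σ p) (σ q), ?_, ?_, fun p h => h.1 rfl, ?_⟩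
  · intro p q hpq hh
    rcases trichotomous_of L (σ p) (σ q) with hlt | heq | hgt
    · exact Or.inl ⟨⟨hpq, hh, hlt⟩, fun h => asymm_of L hlt h.2.2⟩
    · exact absurd (by rw [← hσ p, heq, hσ q]) hpq
    · exact Or.inr ⟨⟨Ne.symm hpq, hh.symm, hgt⟩, fun h => asymm_of L hgt h.2.2⟩
  · rintro p q r ⟨-, hpq, hlt⟩ ⟨-, hqr, hlt'⟩
    refine ⟨?_, hpq.trans hqr, trans_of L hlt hlt'⟩
    rintro rfl
    exact asymm_of L hlt hlt'
  · rintro e e' - ⟨hne, hh, hlt⟩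
    exact hS.lt_of_lt_of_msg_eq hlt (hσ _) (hσ _) (by simpa only [hσ] using hne)
      (by simpa only [hσ] using hh)

end Serialized

theorem Serialized.of_msg_order {X M H : Type*} {msg : X → M} {hdl : M → H} {L : X → X → Prop}
    [IsStrictOrder X L] (lt : M → M → Prop)
    (htotal : ∀ p q : M, p ≠ q → hdl p = hdl q → lt p q ∨ lt q p)
    (hL : ∀ e e' : X, hdl (msg e) = hdl (msg e') → lt (msg e) (msg e') → L e e') :
    Serialized msg hdl L := by
  rintro e₁ e₂ e' h₁₂ hne hh ⟨h₁, h₂⟩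
  rcases htotal (msg e₁) (msg e') (Ne.symm hne) hh.symm with hlt | hlt
  · exact asymm_of L h₂ (hL e₂ e' (h₁₂ ▸ hh.symm) (h₁₂ ▸ hlt))
  · exact asymm_of L h₁ (hL e' e₁ hh hlt)

theorem exists_serialized_linearization_iff_general {X M H : Type*}
    (msg : X → M) (hdl : M → H) (hsurj : Function.Surjective msg)
    (R : X → X → Prop) :
    (∃ L : X → X → Prop, IsStrictTotalOrder X L ∧ Serialized msg hdl L ∧
        ∀ e e' : X, R e e' → L e e') ↔
      (∃ lt : M → M → Prop,
        (∀ p q : M, p ≠ q → hdl p = hdl q → Xor' (lt p q) (lt q p)) ∧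
        (∀ p q r : M, hdl p = hdl q → hdl q = hdl r →
          lt p q → lt q r → lt p r) ∧
        (∀ p : M, ¬ lt p p) ∧
        RelAcyclic (fun e e' : X => R e e' ∨
          (hdl (msg e) = hdl (msg e') ∧ lt (msg e) (msg e')))) := by
  constructor
  · rintro ⟨L, hL, hS, hRL⟩
    obtain ⟨lt, hxor, htrans, hirrefl, hlt⟩ := hS.exists_msg_order hsurj
    refine ⟨lt, hxor, fun p q r _ _ => htrans p q r, hirrefl, relAcyclic_of_le (L := L) ?_⟩
    rintro e e' (hR | ⟨hh, hmsg⟩)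
    · exact hRL e e' hR
    · exact hlt e e' hh hmsg
  · rintro ⟨lt, hxor, -, -, hacyclic⟩
    obtain ⟨L, hL, hle⟩ := hacyclic.exists_isStrictTotalOrder_le
    refine ⟨L, hL, Serialized.of_msg_order lt (fun p q hpq hh => Xor.or (hxor p q hpq hh))
      (fun e e' hh hmsg => hle e e' (Or.inr ⟨hh, hmsg⟩)), fun e e' hR => hle e e' (Or.inl hR)⟩

theorem exists_serialized_linearization_iff {X M H : Type*} [Fintype X] [Fintype M]
    (msg : X → M) (hdl : M → H) (hsurj : Function.Surjective msg)
    (R : X → X → Prop) :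
    (∃ L : X → X → Prop, IsStrictTotalOrder X L ∧ Serialized msg hdl L ∧
        ∀ e e' : X, R e e' → L e e') ↔
      (∃ lt : M → M → Prop,
        (∀ p q : M, p ≠ q → hdl p = hdl q → Xor' (lt p q) (lt q p)) ∧
        (∀ p q r : M, hdl p = hdl q → hdl q = hdl r →
          lt p q → lt q r → lt p r) ∧
        (∀ p : M, ¬ lt p p) ∧
        RelAcyclic (fun e e' : X => R e e' ∨
          (hdl (msg e) = hdl (msg e') ∧ lt (msg e) (msg e')))) :=
  exists_serialized_linearization_iff_general msg hdl hsurj R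
end

section
/- Let X be a finite type of events with msg : X → M (M finite, msg surjective) and hdl : M → H, and let L be a serialized strict linear order on X. Define a relation < on messages by p < q iff p ≠ q, hdl p = hdl q, and every event of p L-precedes every event of q. Then for any two distinct messages p, q with hdl p = hdl q, exactly one of p < q or q < p holds, and < is transitive on the messages of each handler; that is, < is a strict total order on the messages of each handler. In particular, in any serialized execution the messages processed by each handler are executed in some sequential order, one after the other. -/
/-- The induced order on messages: `p` precedes `q` if they are distinct messages
on the same handler and every event of `p` `L`-precedes every event of `q`. -/
def MsgLt {X M H : Type*} (msg : X → M) (hdl : M → H) (L : X → X → Prop)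
    (p q : M) : Prop :=
  p ≠ q ∧ hdl p = hdl q ∧ ∀ e e' : X, msg e = p → msg e' = q → L e e'

/-!
Since `L` is total, a failure of "every event of `p` precedes every event of `q`" yields events
`e ∈ p`, `e' ∈ q` with `e'` before `e`. Serializability lets an event of one message be replaced by
any other event of the same message on either side of a comparison with an event of another message
on the same handler, so every event of `q` precedes every event of `p`. Surjectivity of `msg`
supplies an event of every message, which gives asymmetry and transitivity of the message order.
-/

namespace Serialized

variable {X M H : Type*} {msg : X → M} {hdl : M → H} {L : X → X → Prop}
  [Std.Trichotomous L] {e₁ e₂ x : X}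

theorem rel_left_of_msg_eq (hser : Serialized msg hdl L) (he : msg e₁ = msg e₂)
    (hx : msg x ≠ msg e₁) (hh : hdl (msg x) = hdl (msg e₁)) (h : L e₁ x) : L e₂ x := by
  rcases trichotomous_of L e₂ x with h₂ | rfl | h₂
  · exact h₂
  · exact absurd he.symm hx
  · exact absurd ⟨h, h₂⟩ (hser e₁ e₂ x he hx hh)

theorem rel_right_of_msg_eq (hser : Serialized msg hdl L) (he : msg e₁ = msg e₂)
    (hx : msg x ≠ msg e₁) (hh : hdl (msg x) = hdl (msg e₁)) (h : L x e₁) : L x e₂ := by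
  rcases trichotomous_of L x e₂ with h₂ | rfl | h₂
  · exact h₂
  · exact absurd he.symm hx
  · exact absurd ⟨h₂, h⟩ (hser e₂ e₁ x he.symm (he ▸ hx) (he ▸ hh))

theorem msgLt_of_rel (hser : Serialized msg hdl L) {p q : M} (hne : p ≠ q) (hh : hdl p = hdl q)
    {e e' : X} (he : msg e = p) (he' : msg e' = q) (h : L e e') : MsgLt msg hdl L p q := by
  refine ⟨hne, hh, fun f f' hf hf' => ?_⟩
  have hf'e : L e f' := hser.rel_right_of_msg_eq (he'.trans hf'.symm)
    (by rw [he, he']; exact hne) (by rw [he, he']; exact hh) h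
  exact hser.rel_left_of_msg_eq (he.trans hf.symm)
    (by rw [he, hf']; exact hne.symm) (by rw [he, hf']; exact hh.symm) hf'e

theorem msgLt_or_msgLt (hser : Serialized msg hdl L) {p q : M} (hne : p ≠ q)
    (hh : hdl p = hdl q) : MsgLt msg hdl L p q ∨ MsgLt msg hdl L q p := by
  by_cases hpq : ∀ e e' : X, msg e = p → msg e' = q → L e e'
  · exact Or.inl ⟨hne, hh, hpq⟩
  push Not at hpq
  obtain ⟨e, e', he, he', hee'⟩ := hpq
  rcases trichotomous_of L e e' with h | rfl | h
  · exact absurd h hee'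
  · exact absurd (he.symm.trans he') hne
  · exact Or.inr (hser.msgLt_of_rel hne.symm hh.symm he' he h)

end Serialized

namespace MsgLt

variable {X M H : Type*} {msg : X → M} {hdl : M → H} {L : X → X → Prop} {p q r : M}

theorem asymm [Std.Asymm L] (hsurj : Function.Surjective msg) (hpq : MsgLt msg hdl L p q) :
    ¬ MsgLt msg hdl L q p := fun hqp => by
  obtain ⟨e, rfl⟩ := hsurj p
  obtain ⟨e', rfl⟩ := hsurj q
  exact asymm_of L (hpq.2.2 e e' rfl rfl) (hqp.2.2 e' e rfl rfl)

theorem trans [Std.Asymm L] [IsTrans X L] (hsurj : Function.Surjective msg)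
    (hpq : MsgLt msg hdl L p q) (hqr : MsgLt msg hdl L q r) : MsgLt msg hdl L p r := by
  have hpr : p ≠ r := by
    rintro rfl
    exact hpq.asymm hsurj hqr
  obtain ⟨f, rfl⟩ := hsurj q
  exact ⟨hpr, hpq.2.1.trans hqr.2.1, fun e e' he he' =>
    trans_of L (hpq.2.2 e f he rfl) (hqr.2.2 f e' rfl he')⟩

end MsgLt

theorem serialized_induces_total_order_on_handler_messages_general
    {X M H : Type*}
    (msg : X → M) (hdl : M → H) (hsurj : Function.Surjective msg)
    (L : X → X → Prop) (hL : IsStrictTotalOrder X L)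
    (hser : Serialized msg hdl L) :
    (∀ p q : M, p ≠ q → hdl p = hdl q →
      Xor' (MsgLt msg hdl L p q) (MsgLt msg hdl L q p)) ∧
    (∀ p q r : M, hdl p = hdl q → hdl q = hdl r →
      MsgLt msg hdl L p q → MsgLt msg hdl L q r → MsgLt msg hdl L p r) := by
  refine ⟨fun p q hne hh => ?_, fun p q r _ _ hpq hqr => hpq.trans hsurj hqr⟩
  rcases hser.msgLt_or_msgLt hne hh with hpq | hqp
  · exact Or.inl ⟨hpq, hpq.asymm hsurj⟩
  · exact Or.inr ⟨hqp, hqp.asymm hsurj⟩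

theorem serialized_induces_total_order_on_handler_messages
    {X M H : Type*} [Fintype X] [Fintype M]
    (msg : X → M) (hdl : M → H) (hsurj : Function.Surjective msg)
    (L : X → X → Prop) (hL : IsStrictTotalOrder X L)
    (hser : Serialized msg hdl L) :
    (∀ p q : M, p ≠ q → hdl p = hdl q →
      Xor' (MsgLt msg hdl L p q) (MsgLt msg hdl L q p)) ∧
    (∀ p q r : M, hdl p = hdl q → hdl q = hdl r →
      MsgLt msg hdl L p q → MsgLt msg hdl L q r → MsgLt msg hdl L p r) :=
  serialized_induces_total_order_on_handler_messages_general msg hdl hsurj L hL hser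
end
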